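/- Let k ≥ 3 and let j be an integer with 3 ≤ j ≤ k. Then ∫₀^∞ (-1)^{j-1} · p_k^{(j-1)}(√s) ds = 0, where p_k^{(j-1)} denotes the (j−1)-st derivative of the smooth function p_k(x) = x^{k-1} e^{-x²/2} / (Γ(k/2) · 2^{(k-2)/2}) on ℝ, and the integrand is integrable on [0,∞). -/

import Mathlib

/-!
Substituting `s = x²` turns the integral into `∫₀^∞ 2x p_k^{(j-1)}(x) dx`. Since `x f''(x)` is the
derivative of `x f'(x) - f(x)`, this equals `2 p_k^{(j-3)}(0)`, which vanishes because `p_k` has a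
zero of order `k - 1 > j - 3` at the origin. Every derivative of `p_k` is a polynomial times
`e^{-x²/2}`, which supplies the decay at infinity and the integrability.
-/

open MeasureTheory Set

/-- The density of the χ-distribution with `k` degrees of freedom, regarded as a smooth function
on all of `ℝ`: `p_k(x) = x^{k-1} e^{-x²/2} / (Γ(k/2) · 2^{(k-2)/2})`. -/
noncomputable def chiDensity (k : ℕ) (x : ℝ) : ℝ :=
  x ^ (k - 1) * Real.exp (-x ^ 2 / 2) /
    (Real.Gamma ((k : ℝ) / 2) * (2 : ℝ) ^ (((k : ℝ) - 2) / 2))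

open Polynomial Filter Topology

section SqrtSubstitution

variable {E : Type*} [NormedAddCommGroup E] [NormedSpace ℝ E]

lemma integral_comp_sqrt_Ioi (g : ℝ → E) :
    ∫ s in Ioi 0, g (√s) = ∫ x in Ioi 0, (2 * x) • g x := by
  rw [← integral_comp_rpow_Ioi_of_pos (g := fun s => g √s) two_pos]
  refine setIntegral_congr_fun measurableSet_Ioi fun x (hx : 0 < x) => ?_
  norm_num [Real.sqrt_sq hx.le]

lemma integrableOn_comp_sqrt_Ioi_iff (g : ℝ → E) :
    IntegrableOn (fun s => g (√s)) (Ioi 0) ↔ IntegrableOn (fun x => (2 * x) • g x) (Ioi 0) := by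
  rw [← integrableOn_Ioi_comp_rpow_iff (fun s => g √s) two_ne_zero]
  refine integrableOn_congr_fun (fun x (hx : 0 < x) => ?_) measurableSet_Ioi
  norm_num [Real.sqrt_sq hx.le]

end SqrtSubstitution

noncomputable def polyGauss (Q : ℝ[X]) (x : ℝ) : ℝ :=
  Q.eval x * Real.exp (-x ^ 2 / 2)

noncomputable def gaussDeriv (Q : ℝ[X]) : ℝ[X] :=
  derivative Q - X * Q

lemma hasDerivAt_polyGauss (Q : ℝ[X]) (x : ℝ) :
    HasDerivAt (polyGauss Q) (polyGauss (gaussDeriv Q) x) x := by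
  have hexp : HasDerivAt (fun y : ℝ => Real.exp (-y ^ 2 / 2)) (-x * Real.exp (-x ^ 2 / 2)) x := by
    refine (((hasDerivAt_pow 2 x).fun_neg).div_const 2).exp.congr_deriv ?_
    push_cast
    ring
  refine ((Q.hasDerivAt x).mul hexp).congr_deriv ?_
  simp only [polyGauss, gaussDeriv, eval_sub, eval_mul, eval_X]
  ring

lemma iteratedDeriv_polyGauss (Q : ℝ[X]) (m : ℕ) :
    iteratedDeriv m (polyGauss Q) = polyGauss (gaussDeriv^[m] Q) := by
  induction m with
  | zero => rfl
  | succ m ih =>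
    rw [iteratedDeriv_succ, ih, Function.iterate_succ_apply']
    exact funext fun x => (hasDerivAt_polyGauss _ x).deriv

lemma polyGauss_add (P Q : ℝ[X]) : polyGauss (P + Q) = polyGauss P + polyGauss Q := by
  ext x
  simp only [polyGauss, eval_add, Pi.add_apply, add_mul]

lemma mul_polyGauss (Q : ℝ[X]) (x : ℝ) : x * polyGauss Q x = polyGauss (X * Q) x := by
  simp only [polyGauss, eval_mul, eval_X, mul_assoc]

lemma tendsto_polyGauss_atTop (Q : ℝ[X]) : Tendsto (polyGauss Q) atTop (𝓝 0) := by
  induction Q using Polynomial.induction_on' with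
  | monomial n c =>
    have hlim : Tendsto (fun x : ℝ => |c| * (x ^ n * Real.exp (-x))) atTop (𝓝 0) := by
      simpa using (Real.tendsto_pow_mul_exp_neg_atTop_nhds_zero n).const_mul |c|
    refine squeeze_zero_norm' ?_ hlim
    filter_upwards [eventually_ge_atTop (2 : ℝ)] with x hx
    have hexp : Real.exp (-x ^ 2 / 2) ≤ Real.exp (-x) := Real.exp_le_exp.2 (by nlinarith)
    simp only [polyGauss, eval_monomial, Real.norm_eq_abs, abs_mul, abs_pow,
      abs_of_nonneg (by linarith : (0 : ℝ) ≤ x), Real.abs_exp, mul_assoc]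
    gcongr
  | add P Q hP hQ => rw [polyGauss_add, ← add_zero (0 : ℝ)]; exact hP.add hQ

lemma integrableOn_polyGauss_Ioi (Q : ℝ[X]) : IntegrableOn (polyGauss Q) (Ioi 0) := by
  induction Q using Polynomial.induction_on' with
  | monomial n c =>
    have h := (integrableOn_rpow_mul_exp_neg_mul_rpow (s := n) (p := 2) (b := 1 / 2)
      (by linarith [n.cast_nonneg (α := ℝ)]) two_pos one_half_pos).const_mul c
    refine IntegrableOn.congr_fun h (fun x _ => ?_) measurableSet_Ioi
    simp only [polyGauss, eval_monomial, Real.rpow_natCast, Real.rpow_two]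
    ring_nf
  | add P Q hP hQ => rw [polyGauss_add]; exact hP.add hQ

lemma integrableOn_Ioi_mul_polyGauss (Q : ℝ[X]) :
    IntegrableOn (fun x => x * polyGauss Q x) (Ioi 0) := by
  simpa only [mul_polyGauss] using integrableOn_polyGauss_Ioi (X * Q)

/-- `x f'(x) - f(x)` is an antiderivative of `x f''(x)`; it vanishes at infinity and equals
`-f(0)` at the origin. -/
lemma integral_Ioi_mul_polyGauss_gaussDeriv_gaussDeriv (Q : ℝ[X]) :
    ∫ x in Ioi 0, x * polyGauss (gaussDeriv (gaussDeriv Q)) x = Q.eval 0 := by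
  set F := polyGauss (X * gaussDeriv Q - Q)
  have hF : ∀ x, HasDerivAt F (x * polyGauss (gaussDeriv (gaussDeriv Q)) x) x := by
    intro x
    convert hasDerivAt_polyGauss _ x using 1
    rw [mul_polyGauss]
    congr 1
    simp only [gaussDeriv, derivative_sub, derivative_mul, derivative_X]
    ring
  rw [integral_Ioi_of_hasDerivAt_of_tendsto (hF 0).continuousAt.continuousWithinAt
    (fun x _ => hF x) (integrableOn_Ioi_mul_polyGauss _) (tendsto_polyGauss_atTop _)]
  simp [F, polyGauss]

lemma X_pow_dvd_gaussDeriv {n : ℕ} {Q : ℝ[X]} (h : X ^ (n + 1) ∣ Q) : X ^ n ∣ gaussDeriv Q := by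
  obtain ⟨R, rfl⟩ := h
  refine dvd_sub ⟨C ((n + 1 : ℕ) : ℝ) * R + X * derivative R, ?_⟩ ⟨X * X * R, by ring⟩
  rw [derivative_mul, derivative_X_pow, Nat.add_sub_cancel]
  ring

lemma X_pow_dvd_iterate_gaussDeriv {n : ℕ} {Q : ℝ[X]} (m : ℕ) (h : X ^ (n + m) ∣ Q) :
    X ^ n ∣ gaussDeriv^[m] Q := by
  induction m generalizing Q with
  | zero => exact h
  | succ m ih =>
    rw [Function.iterate_succ_apply]
    exact ih (X_pow_dvd_gaussDeriv (by rwa [← add_assoc] at h))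

noncomputable def chiPoly (k : ℕ) : ℝ[X] :=
  C (Real.Gamma (k / 2) * 2 ^ (((k : ℝ) - 2) / 2))⁻¹ * X ^ (k - 1)

lemma chiDensity_eq_polyGauss (k : ℕ) : chiDensity k = polyGauss (chiPoly k) := by
  ext x
  simp only [chiDensity, polyGauss, chiPoly, eval_mul, eval_C, eval_pow, eval_X]
  ring

lemma eval_zero_iterate_gaussDeriv_chiPoly {k m : ℕ} (h : m + 1 < k) :
    (gaussDeriv^[m] (chiPoly k)).eval 0 = 0 := by
  obtain ⟨R, hR⟩ := X_pow_dvd_iterate_gaussDeriv (n := 1) (Q := chiPoly k) m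
    (dvd_mul_of_dvd_right (pow_dvd_pow X (by omega : 1 + m ≤ k - 1)) _)
  simp [hR]

theorem integral_iteratedDeriv_chiDensity_sqrt_general (k j : ℕ)
    (hj₁ : 3 ≤ j) (hj₂ : j ≤ k) :
    IntegrableOn
      (fun s => (-1 : ℝ) ^ (j - 1) * iteratedDeriv (j - 1) (chiDensity k) (Real.sqrt s))
      (Ici (0 : ℝ)) ∧
    (∫ s in Ioi (0 : ℝ),
      (-1 : ℝ) ^ (j - 1) * iteratedDeriv (j - 1) (chiDensity k) (Real.sqrt s)) = 0 := by
  obtain ⟨m, hm⟩ : ∃ m, j - 1 = m + 2 := ⟨j - 3, by omega⟩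
  rw [hm]
  set P := gaussDeriv^[m] (chiPoly k)
  have hderiv : iteratedDeriv (m + 2) (chiDensity k) = polyGauss (gaussDeriv (gaussDeriv P)) := by
    rw [chiDensity_eq_polyGauss, iteratedDeriv_polyGauss, Function.iterate_succ_apply',
      Function.iterate_succ_apply']
  have hweight : (fun x => (2 * x) • iteratedDeriv (m + 2) (chiDensity k) x) =
      fun x => 2 * (x * polyGauss (gaussDeriv (gaussDeriv P)) x) := by
    ext x
    rw [hderiv, smul_eq_mul, mul_assoc]
  have hint : IntegrableOn (fun s => iteratedDeriv (m + 2) (chiDensity k) √s) (Ioi 0) := by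
    rw [integrableOn_comp_sqrt_Ioi_iff, hweight]
    exact (integrableOn_Ioi_mul_polyGauss _).const_mul 2
  refine ⟨(integrableOn_Ici_iff_integrableOn_Ioi).2 (hint.const_mul _), ?_⟩
  rw [integral_const_mul, integral_comp_sqrt_Ioi, hweight, integral_const_mul,
    integral_Ioi_mul_polyGauss_gaussDeriv_gaussDeriv,
    eval_zero_iterate_gaussDeriv_chiPoly (by omega)]
  simp

/-- for `k ≥ 3` and an integer `j` with `3 ≤ j ≤ k`,
`∫₀^∞ (-1)^{j-1} p_k^{(j-1)}(√s) ds = 0`, the integrand being integrable on `[0,∞)`. -/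
theorem integral_iteratedDeriv_chiDensity_sqrt (k j : ℕ) (hk : 3 ≤ k)
    (hj₁ : 3 ≤ j) (hj₂ : j ≤ k) :
    IntegrableOn
      (fun s => (-1 : ℝ) ^ (j - 1) * iteratedDeriv (j - 1) (chiDensity k) (Real.sqrt s))
      (Ici (0 : ℝ)) ∧
    (∫ s in Ioi (0 : ℝ),
      (-1 : ℝ) ^ (j - 1) * iteratedDeriv (j - 1) (chiDensity k) (Real.sqrt s)) = 0 :=
  integral_iteratedDeriv_chiDensity_sqrt_general k j hj₁ hj₂
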